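/- Let m and l be stable symmetric means and let M be an (l,m)-stabilizable mean. Let (m_v)_{v∈[0,1]} be a weighted mean with m_{1/2} = m and (l_v)_{v∈[0,1]} a weighted mean with l_{1/2} = l. Then the family M_v defined by M_v(a,b) = l_v( M(m_v(a,b), a), M(m_v(a,b), b) ) is an M-weighted mean; i.e., each M_v is a mean, M_{1/2} = M, and M_v(a,b) = M_{1−v}(b,a) for all a,b > 0 and v ∈ [0,1]. -/
import Mathlib


/-- A (binary) mean: `min(a,b) ≤ m(a,b) ≤ max(a,b)` for all `a, b > 0`. -/
def IsMean (m : ℝ → ℝ → ℝ) : Prop :=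
  ∀ a b : ℝ, 0 < a → 0 < b → min a b ≤ m a b ∧ m a b ≤ max a b

/-- A symmetric binary map on positive reals. -/
def IsSymmetric (m : ℝ → ℝ → ℝ) : Prop :=
  ∀ a b : ℝ, 0 < a → 0 < b → m a b = m b a

/-- A mean `m` is strict if `m(a,b) = a` implies `a = b`. -/
def IsStrictMean (m : ℝ → ℝ → ℝ) : Prop :=
  ∀ a b : ℝ, 0 < a → 0 < b → m a b = a → a = b

/-- The trivial means are `min` and `max`. -/
def IsTrivialMean (m : ℝ → ℝ → ℝ) : Prop :=
  (∀ a b : ℝ, 0 < a → 0 < b → m a b = min a b) ∨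
    (∀ a b : ℝ, 0 < a → 0 < b → m a b = max a b)

/-- A family `(m_v)_{v ∈ [0,1]}` is a weighted mean if every `m_v` is a mean,
`m_{1/2}` is symmetric, and `m_v(a,b) = m_{1-v}(b,a)`. -/
def IsWeightedMean (m : ℝ → ℝ → ℝ → ℝ) : Prop :=
  (∀ v ∈ Set.Icc (0 : ℝ) 1, IsMean (m v)) ∧ IsSymmetric (m (1 / 2)) ∧
    ∀ v ∈ Set.Icc (0 : ℝ) 1, ∀ a b : ℝ, 0 < a → 0 < b → m v a b = m (1 - v) b a

/-- The resultant mean-map `ℛ(m₁,m₂,m₃)(a,b) = m₁(m₂(a, m₃(a,b)), m₂(m₃(a,b), b))`. -/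
def resultant (m₁ m₂ m₃ : ℝ → ℝ → ℝ) (a b : ℝ) : ℝ :=
  m₁ (m₂ a (m₃ a b)) (m₂ (m₃ a b) b)

/-- A symmetric mean `m` is stable if `ℛ(m,m,m) = m`. -/
def IsStable (m : ℝ → ℝ → ℝ) : Prop :=
  ∀ a b : ℝ, 0 < a → 0 < b → resultant m m m a b = m a b

/-- `m` is `(m₁,m₂)`-stabilizable: `m₁, m₂` are nontrivial stable means and `ℛ(m₁,m,m₂) = m`. -/
def IsStabilizableWith (m₁ m m₂ : ℝ → ℝ → ℝ) : Prop :=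
  IsStable m₁ ∧ IsStable m₂ ∧ ¬IsTrivialMean m₁ ∧ ¬IsTrivialMean m₂ ∧
    ∀ a b : ℝ, 0 < a → 0 < b → resultant m₁ m m₂ a b = m a b

/-- A symmetric mean `m` is a cross mean if `m ⊗ m` is symmetric in its four variables. -/
def IsCrossMean (m : ℝ → ℝ → ℝ) : Prop :=
  ∀ f : Fin 4 → ℝ, (∀ i, 0 < f i) → ∀ σ : Equiv.Perm (Fin 4),
    m (m (f (σ 0)) (f (σ 1))) (m (f (σ 2)) (f (σ 3))) = m (m (f 0) (f 1)) (m (f 2) (f 3))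

/-- If `m, l` are stable symmetric means, `M` is `(l,m)`-stabilizable, and `m_v, l_v` are
weighted means with `m_{1/2} = m`, `l_{1/2} = l`, then
`M_v(a,b) = l_v(M(m_v(a,b),a), M(m_v(a,b),b))` defines an `M`-weighted mean. -/
theorem weighted_mean_of_stabilizable (m l : ℝ → ℝ → ℝ) (M : ℝ → ℝ → ℝ)
    (mv lv : ℝ → ℝ → ℝ → ℝ)
    (hm : IsMean m) (hl : IsMean l) (hmSym : IsSymmetric m) (hlSym : IsSymmetric l)
    (hmStable : IsStable m) (hlStable : IsStable l)
    (hM : IsMean M) (hMSym : IsSymmetric M) (hMstab : IsStabilizableWith l M m)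
    (hmv : IsWeightedMean mv) (hlv : IsWeightedMean lv)
    (hmv2 : ∀ a b : ℝ, 0 < a → 0 < b → mv (1 / 2) a b = m a b)
    (hlv2 : ∀ a b : ℝ, 0 < a → 0 < b → lv (1 / 2) a b = l a b) :
    (∀ v ∈ Set.Icc (0 : ℝ) 1,
      IsMean (fun a b => lv v (M (mv v a b) a) (M (mv v a b) b))) ∧
    (∀ a b : ℝ, 0 < a → 0 < b →
      lv (1 / 2) (M (mv (1 / 2) a b) a) (M (mv (1 / 2) a b) b) = M a b) ∧
    (∀ v ∈ Set.Icc (0 : ℝ) 1, ∀ a b : ℝ, 0 < a → 0 < b →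
      lv v (M (mv v a b) a) (M (mv v a b) b) =
        lv (1 - v) (M (mv (1 - v) b a) b) (M (mv (1 - v) b a) a)) := by

  obtain ⟨hmvMean, hmvSym, hmvSwap⟩ := hmv
  obtain ⟨hlvMean, hlvSym, hlvSwap⟩ := hlv
  refine ⟨?_, ?_, ?_⟩
  · intro v hv a b ha hb
    obtain ⟨hc1, hc2⟩ := hmvMean v hv a b ha hb
    have hcpos : 0 < mv v a b := lt_of_lt_of_le (lt_min ha hb) hc1
    obtain ⟨hx1, hx2⟩ := hM (mv v a b) a hcpos ha
    obtain ⟨hy1, hy2⟩ := hM (mv v a b) b hcpos hb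
    have hxpos : 0 < M (mv v a b) a := lt_of_lt_of_le (lt_min hcpos ha) hx1
    have hypos : 0 < M (mv v a b) b := lt_of_lt_of_le (lt_min hcpos hb) hy1
    obtain ⟨hz1, hz2⟩ := hlvMean v hv _ _ hxpos hypos
    have hxlb : min a b ≤ M (mv v a b) a := le_trans (le_min hc1 (min_le_left a b)) hx1
    have hylb : min a b ≤ M (mv v a b) b := le_trans (le_min hc1 (min_le_right a b)) hy1
    have hxub : M (mv v a b) a ≤ max a b := le_trans hx2 (max_le hc2 (le_max_left a b))
    have hyub : M (mv v a b) b ≤ max a b := le_trans hy2 (max_le hc2 (le_max_right a b))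
    exact ⟨le_trans (le_min hxlb hylb) hz1, le_trans hz2 (max_le hxub hyub)⟩
  · intro a b ha hb
    obtain ⟨hc1, hc2⟩ := hm a b ha hb
    have hcpos : 0 < m a b := lt_of_lt_of_le (lt_min ha hb) hc1
    rw [hmv2 a b ha hb, hlv2 _ _ (lt_of_lt_of_le (lt_min hcpos ha) (hM _ _ hcpos ha).1)
      (lt_of_lt_of_le (lt_min hcpos hb) (hM _ _ hcpos hb).1),
      hMSym (m a b) a hcpos ha]
    exact hMstab.2.2.2.2 a b ha hb
  · intro v hv a b ha hb
    obtain ⟨hc1, hc2⟩ := hmvMean v hv a b ha hb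
    have hcpos : 0 < mv v a b := lt_of_lt_of_le (lt_min ha hb) hc1
    have hswap := hmvSwap v hv a b ha hb
    rw [hswap] at hcpos ⊢
    exact hlvSwap v hv _ _ (lt_of_lt_of_le (lt_min hcpos ha) (hM _ _ hcpos ha).1)
      (lt_of_lt_of_le (lt_min hcpos hb) (hM _ _ hcpos hb).1)
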